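/- Pattern-probing lemma: let P be a program without extra variables, let bot be a fresh 0-ary constructor, and define the map t ↦ t̂ on partial patterns by X̂ = X, ⊥̂ = bot, and (h t1…tm)^ = h t̂1 … t̂m. For each partial pattern t let g_t be a fresh unary function symbol and let P_{g_t} consist of the rules g_X U → U, g_⊥ X → bot, and g_{(h t1…tm)} (h X1…Xm) → h (g_{t1} X1) … (g_{tm} Xm). Set P' = P ⊎ P_{g_t}. Then (i) P' is a safe extension of (P, e), and (ii) for every expression e and partial pattern t built with the signature of P: t ∈ ⟦e⟧^P if and only if t̂ ∈ ⟦g_t e⟧^{P'}. -/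

import Mathlib

/-- A signature: function symbols and constructor symbols, each with an arity. -/
structure Sig where
  FS : Type
  CS : Type
  arityF : FS → ℕ
  arityC : CS → ℕ

/-- Applicative partial expressions over a signature.  Variables are natural
numbers and `bot` is the distinguished 0-ary constructor `⊥`. -/
inductive Exp (σ : Sig) : Type where
  | var : ℕ → Exp σ
  | fn : σ.FS → Exp σ
  | cn : σ.CS → Exp σ
  | bot : Exp σ
  | app : Exp σ → Exp σ → Exp σ

variable {σ : Sig}

/-- `applyList e [e1, …, en]` is the curried application `e e1 … en`. -/
def applyList (e : Exp σ) (es : List (Exp σ)) : Exp σ := es.foldl Exp.app e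

/-- Partial patterns `Pat_⊥`. -/
inductive IsPPat : Exp σ → Prop where
  | var (x : ℕ) : IsPPat (Exp.var x)
  | bot : IsPPat (Exp.bot : Exp σ)
  | capp (c : σ.CS) (ts : List (Exp σ)) (har : ts.length ≤ σ.arityC c)
      (hts : ∀ t ∈ ts, IsPPat t) : IsPPat (applyList (Exp.cn c) ts)
  | fapp (f : σ.FS) (ts : List (Exp σ)) (har : ts.length < σ.arityF f)
      (hts : ∀ t ∈ ts, IsPPat t) : IsPPat (applyList (Exp.fn f) ts)

/-- The constructor `⊥` does not occur in the expression. -/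
def BotFree : Exp σ → Prop
  | .bot => False
  | .app a b => BotFree a ∧ BotFree b
  | _ => True

/-- Total patterns `Pat`. -/
def IsPat (t : Exp σ) : Prop := IsPPat t ∧ BotFree t

/-- First-order patterns `FOPat`. -/
inductive IsFOPat : Exp σ → Prop where
  | var (x : ℕ) : IsFOPat (Exp.var x)
  | capp (c : σ.CS) (ts : List (Exp σ)) (har : ts.length = σ.arityC c)
      (hts : ∀ t ∈ ts, IsFOPat t) : IsFOPat (applyList (Exp.cn c) ts)

/-- The list of occurrences of variables in an expression. -/
def occVars : Exp σ → List ℕ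
  | .var x => [x]
  | .app a b => occVars a ++ occVars b
  | _ => []

/-- Applying a substitution to an expression. -/
def subst (θ : ℕ → Exp σ) : Exp σ → Exp σ
  | .var x => θ x
  | .fn f => .fn f
  | .cn c => .cn c
  | .bot => .bot
  | .app a b => .app (subst θ a) (subst θ b)

/-- Partial-pattern substitutions `PSubst_⊥`. -/
def PSub (θ : ℕ → Exp σ) : Prop := ∀ x, IsPPat (θ x)

/-- A program rule `f t1 … tn → r` (the left-hand side is `f` applied to `lhs`). -/
structure Rule (σ : Sig) where
  fn : σ.FS
  lhs : List (Exp σ)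
  rhs : Exp σ

/-- Well-formedness of a rule: `f` is applied to as many arguments as its arity,
the arguments form a linear tuple of total patterns. -/
def Rule.WF (r : Rule σ) : Prop :=
  r.lhs.length = σ.arityF r.fn ∧ (∀ t ∈ r.lhs, IsPat t) ∧
    (r.lhs.flatMap occVars).Nodup

/-- The rule has no extra variables: all variables of the right-hand side occur
in the left-hand side. -/
def Rule.NoExtra (r : Rule σ) : Prop :=
  ∀ x ∈ occVars r.rhs, x ∈ r.lhs.flatMap occVars

abbrev Program (σ : Sig) := Set (Rule σ)

/-- A program without extra variables, all whose rules are well formed. -/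
def WFProg (P : Program σ) : Prop := ∀ r ∈ P, r.WF ∧ r.NoExtra

/-- `h ∈ Σ` (a function symbol, a constructor symbol, or `⊥`). -/
def IsSymb : Exp σ → Prop
  | .fn _ => True
  | .cn _ => True
  | .bot => True
  | _ => False

/-- HOCRWL derivation trees for statements `e ⇒ t`, with rules
(B), (RR), (DC) and (OR). -/
inductive DTree (P : Program σ) : Exp σ → Exp σ → Type where
  | bot (e : Exp σ) : DTree P e Exp.bot
  | rr (x : ℕ) : DTree P (Exp.var x) (Exp.var x)
  | dc (h : Exp σ) (es ts : List (Exp σ)) (hsym : IsSymb h)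
      (hlen : es.length = ts.length) (hpat : IsPPat (applyList h ts))
      (ds : ∀ p ∈ es.zip ts, DTree P p.1 p.2) :
      DTree P (applyList h es) (applyList h ts)
  | opr (r : Rule σ) (hr : r ∈ P) (θ : ℕ → Exp σ) (hθ : PSub θ)
      (es as : List (Exp σ)) (t : Exp σ) (hlen : es.length = r.lhs.length)
      (ds : ∀ p ∈ es.zip (r.lhs.map (subst θ)), DTree P p.1 p.2)
      (d : DTree P (applyList (subst θ r.rhs) as) t) :
      DTree P (applyList (Exp.fn r.fn) (es ++ as)) t

/-- `P ⊢ e ⇒ t` is derivable in the HOCRWL proof calculus. -/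
def Deriv (P : Program σ) (e t : Exp σ) : Prop := Nonempty (DTree P e t)

/-- The HOCRWL denotation `⟦e⟧^P = { t ∈ Pat_⊥ | P ⊢ e ⇒ t }`. -/
def den (P : Program σ) (e : Exp σ) : Set (Exp σ) := {t | IsPPat t ∧ Deriv P e t}

/-- Observations: total patterns in the denotation. -/
def Obs (P : Program σ) (e : Exp σ) : Set (Exp σ) := {t | t ∈ den P e ∧ BotFree t}

/-- First-order observations: first-order patterns in the denotation. -/
def ObsFO (P : Program σ) (e : Exp σ) : Set (Exp σ) := {t | t ∈ den P e ∧ IsFOPat t}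

/-- Contexts `C ::= [ ] | C e | e C`. -/
inductive Cntxt (σ : Sig) : Type where
  | hole : Cntxt σ
  | appL : Cntxt σ → Exp σ → Cntxt σ
  | appR : Exp σ → Cntxt σ → Cntxt σ

/-- Filling the hole of a context with an expression. -/
def Cntxt.fill : Cntxt σ → Exp σ → Exp σ
  | .hole, e => e
  | .appL C e', e => .app (C.fill e) e'
  | .appR e' C, e => .app e' (C.fill e)

/-- Function symbols occurring in an expression. -/
def expFS : Exp σ → Set σ.FS
  | .fn f => {f}
  | .app a b => expFS a ∪ expFS b
  | _ => ∅

/-- Function symbols occurring in a rule. -/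
def ruleFS (r : Rule σ) : Set σ.FS :=
  insert r.fn ((⋃ t ∈ r.lhs, expFS t) ∪ expFS r.rhs)

/-- Function symbols occurring in a program. -/
def progFS (P : Program σ) : Set σ.FS := ⋃ r ∈ P, ruleFS r

/-- Function symbols defined by a program (roots of left-hand sides). -/
def defs (P : Program σ) : Set σ.FS := Rule.fn '' P

/-- `P'` is a safe extension of `(P, e)`: `P' = P ⊎ P''` where `P''` defines no
function symbol occurring in `P` or in `e`. -/
def SafeExt (P P' : Program σ) (e : Exp σ) : Prop :=
  ∃ P'' : Program σ, P' = P ∪ P'' ∧ Disjoint P P'' ∧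
    Disjoint (defs P'') (expFS e ∪ progFS P)

/-- `e ∼ₙ e'` : `n`-extensional equivalence. -/
def ExtEquiv (P : Program σ) (n : ℕ) (e e' : Exp σ) : Prop :=
  ∀ es : List (Exp σ), es.length = n →
    den P (applyList e es) = den P (applyList e' es)

/-- The signature of `P` extended with a fresh 0-ary constructor `bot` and,
for every (partial pattern) `t`, a fresh unary function symbol `g_t`. -/
def extSig (σ : Sig) : Sig where
  FS := σ.FS ⊕ Exp σ
  CS := σ.CS ⊕ Unit
  arityF := Sum.elim σ.arityF fun _ => 1
  arityC := Sum.elim σ.arityC fun _ => 0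

/-- The embedding of expressions of the original signature into the
extended one. -/
def embed : Exp σ → Exp (extSig σ)
  | .var x => .var x
  | .fn f => .fn (.inl f)
  | .cn c => .cn (.inl c)
  | .bot => .bot
  | .app a b => .app (embed a) (embed b)

/-- The transformation `t ↦ t̂` : `X̂ = X`, `⊥̂ = bot`, and
`(h t1…tm)^ = h t̂1 … t̂m`. -/
def hat : Exp σ → Exp (extSig σ)
  | .var x => .var x
  | .fn f => .fn (.inl f)
  | .cn c => .cn (.inl c)
  | .bot => .cn (.inr ())
  | .app a b => .app (hat a) (hat b)

def embedRule (r : Rule σ) : Rule (extSig σ) :=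
  ⟨.inl r.fn, r.lhs.map embed, embed r.rhs⟩

def embedProg (P : Program σ) : Program (extSig σ) := embedRule '' P

/-- The fresh function symbol `g_t`, as an expression. -/
def gE (t : Exp σ) : Exp (extSig σ) := .fn (.inr t)

/-- A symbol `h ∈ FS ∪ CS` as an expression. -/
def symExp : σ.FS ⊕ σ.CS → Exp σ := Sum.elim Exp.fn Exp.cn

/-- The rule `g_{h t1…tm} (h X1…Xm) → h (g_{t1} X1) … (g_{tm} Xm)`. -/
def gAppRule (h : σ.FS ⊕ σ.CS) (ts : List (Exp σ)) : Rule (extSig σ) where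
  fn := .inr (applyList (symExp h) ts)
  lhs := [applyList (embed (symExp h)) ((List.range ts.length).map Exp.var)]
  rhs := applyList (embed (symExp h))
      (ts.mapIdx fun i t => Exp.app (gE t) (Exp.var i))

/-- The program `P_{g_t}` consisting of the rules `g_X U → U`,
`g_⊥ X → bot` and `g_{h t1…tm} (h X1…Xm) → h (g_{t1} X1) … (g_{tm} Xm)`. -/
def Pg (σ : Sig) : Program (extSig σ) :=
  {r | (∃ x : ℕ, r = ⟨.inr (.var x), [.var 0], .var 0⟩) ∨
       r = ⟨.inr .bot, [.var 0], .cn (.inr ())⟩ ∨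
       ∃ (h : σ.FS ⊕ σ.CS) (ts : List (Exp σ)),
         IsPPat (applyList (symExp h) ts) ∧ r = gAppRule h ts}

/-!
If `e ⇒ t` in `P`, the rules for `g_t` peel `t` off one layer at a time: `g_{h t₁…tₘ}` matches the
derived value `h t₁ … tₘ` and calls `g_{tᵢ}` on each argument, `g_X` returns the variable and
`g_⊥` turns the hole into the observable constructor `bot`; this yields `g_t e ⇒ t̂`.

Conversely, a derivation of `g_t e ⇒ t̂` has to start with the unique rule for `g_t`. For
`t = h t₁ … tₘ` it first derives `e ⇒ h X₁θ … Xₘθ`; since no fresh symbol occurs in `e` or in `P`,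
this is already a derivation in `P`, and all `Xᵢθ` are free of fresh symbols. Only `(DC)` can then
derive `h (g_{t₁} X₁θ) … (g_{tₘ} Xₘθ) ⇒ h t̂₁ … t̂ₘ`, so by induction `Xᵢθ ⇒ tᵢ` in `P`, i.e.
`tᵢ ⊑ Xᵢθ`, and `e ⇒ h t₁ … tₘ` follows because `⇒` is downward closed in its right-hand side.
-/

open List (Forall₂)

lemma List.Forall₂.join_right {α β γ : Type*} {R : α → β → Prop} {S : γ → β → Prop}
    {T : α → γ → Prop} :
    ∀ {l₁ l₂ l₃}, Forall₂ R l₁ l₂ → Forall₂ S l₃ l₂ → (∀ a b c, R a b → S c b → T a c) →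
      Forall₂ T l₁ l₃
  | _, _, _, .nil, .nil, _ => .nil
  | _, _, _, .cons h₁ h₂, .cons h₃ h₄, hT => .cons (hT _ _ _ h₁ h₃) (join_right h₂ h₄ hT)

lemma List.Forall₂.forall_mem_right {α β : Type*} {R : α → β → Prop} {p : β → Prop} :
    ∀ {l₁ l₂}, Forall₂ R l₁ l₂ → (∀ a b, R a b → p b) → ∀ b ∈ l₂, p b
  | _, _, .nil, _ => by simp
  | _, _, .cons h₁ h₂, hp => by
    simpa using ⟨hp _ _ h₁, h₂.forall_mem_right hp⟩

lemma List.forall₂_mapIdx_map_iff {α β γ : Type*} {R : β → γ → Prop} {f : ℕ → α → β}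
    {g : α → γ} {l : List α} :
    Forall₂ R (l.mapIdx f) (l.map g) ↔ ∀ i (hi : i < l.length), R (f i l[i]) (g l[i]) := by
  simp [List.forall₂_iff_get]

lemma List.forall₂_map_range_iff {α β : Type*} {R : α → β → Prop} {f : ℕ → β} {l : List α} :
    Forall₂ R l ((List.range l.length).map f) ↔ ∀ i (hi : i < l.length), R l[i] (f i) := by
  simp [List.forall₂_iff_get]

section Spine

@[simp] lemma applyList_nil (h : Exp σ) : applyList h [] = h := rfl

@[simp] lemma applyList_cons (h a : Exp σ) (l : List (Exp σ)) :
    applyList h (a :: l) = applyList (.app h a) l := rfl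

lemma applyList_concat (h : Exp σ) (l : List (Exp σ)) (b : Exp σ) :
    applyList h (l ++ [b]) = .app (applyList h l) b :=
  List.foldl_concat ..

lemma map_applyList {τ : Sig} (F : Exp σ → Exp τ) (hF : ∀ a b, F (.app a b) = .app (F a) (F b))
    (h : Exp σ) (l : List (Exp σ)) : F (applyList h l) = applyList (F h) (l.map F) := by
  induction l generalizing h with
  | nil => rfl
  | cons a l ih => simp [ih, hF]

namespace Exp

def head : Exp σ → Exp σ
  | .app a _ => head a
  | e => e

def args : Exp σ → List (Exp σ)
  | .app a b => args a ++ [b]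
  | _ => []

@[simp] lemma head_applyList (h : Exp σ) (l : List (Exp σ)) : (applyList h l).head = h.head := by
  induction l generalizing h with
  | nil => rfl
  | cons a l ih => exact ih _

@[simp] lemma args_applyList (h : Exp σ) (l : List (Exp σ)) :
    (applyList h l).args = h.args ++ l := by
  induction l generalizing h with
  | nil => simp
  | cons a l ih => simp [ih, args]

end Exp

lemma IsSymb.head_eq {h : Exp σ} (hh : IsSymb h) : h.head = h := by
  cases h <;> first | rfl | exact hh.elim

lemma IsSymb.args_eq {h : Exp σ} (hh : IsSymb h) : h.args = [] := by
  cases h <;> first | rfl | exact hh.elim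

lemma applyList_inj {h h' : Exp σ} {es es' : List (Exp σ)}
    (he : applyList h es = applyList h' es') (hh : IsSymb h) (hh' : IsSymb h') :
    h = h' ∧ es = es' := by
  have hhead := congrArg Exp.head he
  have hargs := congrArg Exp.args he
  simp only [Exp.head_applyList, Exp.args_applyList, hh.head_eq, hh'.head_eq, hh.args_eq,
    hh'.args_eq, List.nil_append] at hhead hargs
  exact ⟨hhead, hargs⟩

lemma applyList_ne_var {h : Exp σ} (hh : IsSymb h) (es : List (Exp σ)) (x : ℕ) :
    applyList h es ≠ .var x := fun he => by
  have hhead := congrArg Exp.head he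
  rw [Exp.head_applyList, hh.head_eq] at hhead
  subst hhead
  exact hh

lemma isSymb_symExp (h : σ.FS ⊕ σ.CS) : IsSymb (symExp h) := by
  cases h <;> trivial

lemma symExp_ne_bot (h : σ.FS ⊕ σ.CS) : symExp h ≠ .bot := by
  cases h <;> simp [symExp]

lemma symExp_injective : Function.Injective (symExp (σ := σ)) := by
  rintro (f | c) (f' | c') he <;> simp_all [symExp]

end Spine

section PartialPatterns

@[elab_as_elim]
lemma IsPPat.induction_symExp {motive : (t : Exp σ) → IsPPat t → Prop}
    (var : ∀ x, motive (.var x) (.var x))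
    (bot : motive .bot .bot)
    (app : ∀ (h : σ.FS ⊕ σ.CS) (ts : List (Exp σ)) (hp : IsPPat (applyList (symExp h) ts)),
      (∀ t (ht : IsPPat t), t ∈ ts → motive t ht) → motive (applyList (symExp h) ts) hp)
    {t : Exp σ} (ht : IsPPat t) : motive t ht := by
  induction ht with
  | var x => exact var x
  | bot => exact bot
  | capp c ts har hts ih => exact app (.inr c) ts (.capp c ts har hts) fun t _ h => ih t h
  | fapp f ts har hts ih => exact app (.inl f) ts (.fapp f ts har hts) fun t _ h => ih t h

lemma IsPPat.of_mem_args {h : Exp σ} {es : List (Exp σ)} (hh : IsSymb h)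
    (hp : IsPPat (applyList h es)) : ∀ e ∈ es, IsPPat e := by
  generalize he : applyList h es = p at hp
  cases hp with
  | var x => exact absurd he (applyList_ne_var hh es x)
  | bot => simp [(applyList_inj (es' := []) he hh (by trivial)).2]
  | capp c ts _ hts => rwa [(applyList_inj he hh (by trivial)).2]
  | fapp f ts _ hts => rwa [(applyList_inj he hh (by trivial)).2]

lemma IsPPat.length_lt_arityF {f : σ.FS} {es : List (Exp σ)}
    (hp : IsPPat (applyList (.fn f) es)) : es.length < σ.arityF f := by
  generalize he : applyList (.fn f) es = p at hp
  cases hp with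
  | var x => exact absurd he (applyList_ne_var (by trivial) es x)
  | bot => cases (applyList_inj (es' := []) he (by trivial) (by trivial)).1
  | capp c ts _ _ => cases (applyList_inj he (by trivial) (by trivial)).1
  | fapp g ts har _ =>
    obtain ⟨hfg, rfl⟩ := applyList_inj he (by trivial) (by trivial)
    cases hfg
    exact har

end PartialPatterns

section Approximation

/-- The information order `q ⊑ p`: `q` is obtained from `p` by replacing subexpressions by `⊥`. -/
inductive Approx : Exp σ → Exp σ → Prop
  | bot (e : Exp σ) : Approx .bot e
  | var (x : ℕ) : Approx (.var x) (.var x)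
  | fn (f : σ.FS) : Approx (.fn f) (.fn f)
  | cn (c : σ.CS) : Approx (.cn c) (.cn c)
  | app {a a' b b' : Exp σ} : Approx a a' → Approx b b' → Approx (.app a b) (.app a' b')

namespace Approx

lemma refl : ∀ e : Exp σ, Approx e e
  | .var x => .var x
  | .fn f => .fn f
  | .cn c => .cn c
  | .bot => .bot _
  | .app a b => .app (refl a) (refl b)

lemma applyList_mono {h h' : Exp σ} {qs ts : List (Exp σ)} (hh : Approx h h')
    (hs : Forall₂ Approx qs ts) : Approx (applyList h qs) (applyList h' ts) := by
  induction hs generalizing h h' with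
  | nil => exact hh
  | cons hab _ ih => exact ih (hh.app hab)

lemma eq_of_isSymb {a p : Exp σ} (ha : IsSymb a) (ha' : a ≠ .bot) (hap : Approx a p) : p = a := by
  cases hap <;> first | rfl | exact ha.elim | exact absurd rfl ha'

lemma var_left {x : ℕ} {p : Exp σ} (h : Approx (.var x) p) : p = .var x := by
  cases h
  rfl

lemma app_inv {a b p : Exp σ} (h : Approx (.app a b) p) :
    ∃ a' b', p = .app a' b' ∧ Approx a a' ∧ Approx b b' := by
  cases h with
  | app ha hb => exact ⟨_, _, rfl, ha, hb⟩

lemma applyList_inv {a b : Exp σ} {qs ts : List (Exp σ)} (ha : IsSymb a) (ha' : a ≠ .bot)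
    (hb : IsSymb b) (h : Approx (applyList a qs) (applyList b ts)) :
    a = b ∧ Forall₂ Approx qs ts := by
  induction qs using List.reverseRecOn generalizing ts with
  | nil =>
    rw [applyList_nil] at h
    obtain ⟨hba, rfl⟩ := applyList_inj (es' := []) (eq_of_isSymb ha ha' h) hb ha
    exact ⟨hba.symm, .nil⟩
  | append_singleton l x ih =>
    rw [applyList_concat] at h
    obtain ⟨a', b', hts, hl, hx⟩ := h.app_inv
    obtain rfl | ⟨ts', y, rfl⟩ := ts.eq_nil_or_concat
    · rw [applyList_nil] at hts
      subst hts
      simp [IsSymb] at hb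
    · simp only [List.concat_eq_append, applyList_concat] at hts ⊢
      obtain ⟨rfl, rfl⟩ := Exp.app.inj hts
      obtain ⟨rfl, hlts⟩ := ih hl
      exact ⟨rfl, List.rel_append hlts (.cons hx .nil)⟩

lemma inv_of_isPPat {q h : Exp σ} {ts : List (Exp σ)} (hh : IsSymb h) (hq : IsPPat q)
    (ha : Approx q (applyList h ts)) :
    q = .bot ∨ ∃ qs, q = applyList h qs ∧ Forall₂ Approx qs ts := by
  induction hq using IsPPat.induction_symExp with
  | var x => exact absurd ha.var_left (applyList_ne_var hh ts x)
  | bot => exact .inl rfl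
  | app h' qs _ _ =>
    obtain ⟨rfl, hqs⟩ := applyList_inv (isSymb_symExp h') (symExp_ne_bot h') hh ha
    exact .inr ⟨qs, rfl, hqs⟩

end Approx

end Approximation

def RespectsArity (P : Program σ) : Prop := ∀ r ∈ P, r.lhs.length = σ.arityF r.fn

lemma WFProg.respectsArity {P : Program σ} (hP : WFProg P) : RespectsArity P :=
  fun r hr => (hP r hr).1.1

namespace Deriv

variable {P Q : Program σ}

lemma bot (e : Exp σ) : Deriv P e .bot := ⟨.bot e⟩

lemma rr (x : ℕ) : Deriv P (.var x) (.var x) := ⟨.rr x⟩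

lemma dc {h : Exp σ} {es ts : List (Exp σ)} (hh : IsSymb h) (hpat : IsPPat (applyList h ts))
    (hd : Forall₂ (Deriv P) es ts) : Deriv P (applyList h es) (applyList h ts) :=
  ⟨.dc h es ts hh hd.length_eq hpat fun _ hp => Classical.choice (List.forall₂_zip hd hp)⟩

lemma opr {r : Rule σ} (hr : r ∈ P) {θ : ℕ → Exp σ} (hθ : PSub θ) {es as : List (Exp σ)}
    {t : Exp σ} (hd : Forall₂ (Deriv P) es (r.lhs.map (subst θ)))
    (hc : Deriv P (applyList (subst θ r.rhs) as) t) :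
    Deriv P (applyList (.fn r.fn) (es ++ as)) t :=
  ⟨.opr r hr θ hθ es as t (by simpa using hd.length_eq)
    (fun _ hp => Classical.choice (List.forall₂_zip hd hp)) (Classical.choice hc)⟩

@[elab_as_elim]
lemma induction {motive : (e t : Exp σ) → Deriv P e t → Prop}
    (bot : ∀ e, motive e .bot (.bot e))
    (rr : ∀ x, motive (.var x) (.var x) (.rr x))
    (dc : ∀ (h : Exp σ) (es ts : List (Exp σ)) (hh : IsSymb h) (hpat : IsPPat (applyList h ts))
      (hd : Forall₂ (fun e t => ∃ d : Deriv P e t, motive e t d) es ts),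
      motive (applyList h es) (applyList h ts) (.dc hh hpat (hd.imp fun _ _ => Exists.fst)))
    (opr : ∀ r (hr : r ∈ P) (θ : ℕ → Exp σ) (hθ : PSub θ) (es as : List (Exp σ)) (t : Exp σ)
      (hd : Forall₂ (fun e t => ∃ d : Deriv P e t, motive e t d) es (r.lhs.map (subst θ)))
      (hc : Deriv P (applyList (subst θ r.rhs) as) t), motive _ t hc →
      motive (applyList (.fn r.fn) (es ++ as)) t (.opr hr hθ (hd.imp fun _ _ => Exists.fst) hc))
    {e t : Exp σ} (d : Deriv P e t) : motive e t d := by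
  obtain ⟨d⟩ := d
  induction d with
  | bot e => exact bot e
  | rr x => exact rr x
  | dc h es ts hh hlen hpat ds ih =>
    exact dc h es ts hh hpat (List.forall₂_iff_zip.2 ⟨hlen, fun hp => ⟨⟨ds _ hp⟩, ih _ hp⟩⟩)
  | opr r hr θ hθ es as t hlen ds d ih ihd =>
    exact opr r hr θ hθ es as t
      (List.forall₂_iff_zip.2 ⟨by simpa using hlen, fun hp => ⟨⟨ds _ hp⟩, ih _ hp⟩⟩) ⟨d⟩ ihd

lemma cases {E s : Exp σ} (d : Deriv P E s) :
    s = .bot ∨ (∃ x, E = .var x ∧ s = .var x) ∨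
    (∃ h es ts, IsSymb h ∧ IsPPat (applyList h ts) ∧ Forall₂ (Deriv P) es ts ∧
      E = applyList h es ∧ s = applyList h ts) ∨
    (∃ r ∈ P, ∃ θ es as, PSub θ ∧ Forall₂ (Deriv P) es (r.lhs.map (subst θ)) ∧
      Deriv P (applyList (subst θ r.rhs) as) s ∧ E = applyList (.fn r.fn) (es ++ as)) := by
  induction d using Deriv.induction with
  | bot => exact .inl rfl
  | rr x => exact .inr (.inl ⟨x, rfl, rfl⟩)
  | dc h es ts hh hpat hd =>
    exact .inr (.inr (.inl ⟨h, es, ts, hh, hpat, hd.imp fun _ _ => Exists.fst, rfl, rfl⟩))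
  | opr r hr θ hθ es as t hd hc =>
    exact .inr (.inr (.inr ⟨r, hr, θ, es, as, hθ, hd.imp fun _ _ => Exists.fst, hc, rfl⟩))

lemma refl {p : Exp σ} (hp : IsPPat p) : Deriv P p p := by
  induction hp with
  | var x => exact .rr x
  | bot => exact .bot _
  | capp c ts har hts ih => exact .dc trivial (.capp c ts har hts) (List.forall₂_same.2 ih)
  | fapp f ts har hts ih => exact .dc trivial (.fapp f ts har hts) (List.forall₂_same.2 ih)

lemma mono_prog (hPQ : P ⊆ Q) {e t : Exp σ} (d : Deriv P e t) : Deriv Q e t := by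
  induction d using Deriv.induction with
  | bot e => exact .bot e
  | rr x => exact .rr x
  | dc h es ts hh hpat hd => exact .dc hh hpat (hd.imp fun _ _ => Exists.snd)
  | opr r hr θ hθ es as t hd hc ih => exact .opr (hPQ hr) hθ (hd.imp fun _ _ => Exists.snd) ih

lemma approx (hP : RespectsArity P) {p q : Exp σ} (d : Deriv P p q) (hp : IsPPat p) :
    Approx q p := by
  induction d using Deriv.induction with
  | bot => exact .bot _
  | rr x => exact .var x
  | dc h es ts hh _ hd =>
    refine (Approx.refl h).applyList_mono (List.Forall₂.flip ?_)
    exact ((List.forall₂_and_left _ _).2 ⟨hp.of_mem_args hh, hd⟩).imp fun _ _ ⟨he, _, ih⟩ => ih he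
  | opr r hr θ _ es as t hd =>
    have hlt := hp.length_lt_arityF
    have hlen := hd.length_eq
    simp only [List.length_append, List.length_map, hP r hr] at hlt hlen
    omega

lemma mono {e p q : Exp σ} (d : Deriv P e p) (hq : Approx q p) (hqp : IsPPat q) :
    Deriv P e q := by
  induction d using Deriv.induction generalizing q with
  | bot e =>
    cases hq
    exact .bot e
  | rr x => cases hq <;> first | exact .bot _ | exact .rr x
  | dc h es ts hh _ hd =>
    obtain rfl | ⟨qs, rfl, hqs⟩ := Approx.inv_of_isPPat hh hqp hq
    · exact .bot _
    · refine .dc hh hqp (hd.join_right ((List.forall₂_and_left _ _).2 ⟨hqp.of_mem_args hh, hqs⟩)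
        fun _ _ _ ⟨_, ih⟩ ⟨hq, hqt⟩ => ih hqt hq)
  | opr r hr θ hθ es as t hd hc ih => exact .opr hr hθ (hd.imp fun _ _ => Exists.fst) (ih hq hqp)

/-- With arities respected, `(OR)` cannot fire on a partial application, so only `(DC)` derives
a pattern with the same head. -/
lemma forall₂_of_applyList (hP : RespectsArity P) {h : Exp σ} {es ts : List (Exp σ)}
    (hh : IsSymb h) (hpat : IsPPat (applyList h ts)) (hlen : es.length = ts.length)
    (d : Deriv P (applyList h es) (applyList h ts)) : Forall₂ (Deriv P) es ts := by
  rcases d.cases with hbot | ⟨x, hx, -⟩ | ⟨h', es', ts', hh', -, hd, he, hs⟩ |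
    ⟨r, hr, θ, es', as, -, hd, -, he⟩
  · obtain ⟨rfl, rfl⟩ := applyList_inj (es' := []) hbot hh trivial
    rw [List.length_nil, List.length_eq_zero_iff] at hlen
    subst hlen
    exact .nil
  · exact absurd hx (applyList_ne_var hh es x)
  · obtain ⟨rfl, rfl⟩ := applyList_inj he hh hh'
    obtain ⟨-, rfl⟩ := applyList_inj hs hh hh'
    exact hd
  · obtain ⟨rfl, rfl⟩ := applyList_inj he hh trivial
    have hlt := hpat.length_lt_arityF
    have hlen' := hd.length_eq
    simp only [List.length_append, List.length_map, hP r hr] at hlt hlen' hlen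
    omega

end Deriv

section Embedding

variable {P : Program σ}

@[simp] lemma extSig_arityF_inl (f : σ.FS) : (extSig σ).arityF (.inl f) = σ.arityF f := rfl
@[simp] lemma extSig_arityF_inr (t : Exp σ) : (extSig σ).arityF (.inr t) = 1 := rfl
@[simp] lemma extSig_arityC_inl (c : σ.CS) : (extSig σ).arityC (.inl c) = σ.arityC c := rfl
@[simp] lemma extSig_arityC_inr (u : Unit) : (extSig σ).arityC (.inr u) = 0 := rfl

lemma embed_applyList (h : Exp σ) (l : List (Exp σ)) :
    embed (applyList h l) = applyList (embed h) (l.map embed) :=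
  map_applyList embed (fun _ _ => rfl) h l

lemma hat_applyList (h : Exp σ) (l : List (Exp σ)) :
    hat (applyList h l) = applyList (hat h) (l.map hat) :=
  map_applyList hat (fun _ _ => rfl) h l

lemma subst_applyList {τ : Sig} (θ : ℕ → Exp τ) (h : Exp τ) (l : List (Exp τ)) :
    subst θ (applyList h l) = applyList (subst θ h) (l.map (subst θ)) :=
  map_applyList (subst θ) (fun _ _ => rfl) h l

@[simp] lemma subst_embed (θ : ℕ → Exp σ) (u : Exp σ) :
    subst (fun x => embed (θ x)) (embed u) = embed (subst θ u) := by
  induction u <;> simp_all [embed, subst]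

lemma hat_symExp (h : σ.FS ⊕ σ.CS) : hat (symExp h) = embed (symExp h) := by
  cases h <;> rfl

lemma hat_ne_bot (t : Exp σ) : hat t ≠ .bot := by
  cases t <;> simp [hat]

lemma IsSymb.embed {h : Exp σ} (hh : IsSymb h) : IsSymb (embed h) := by
  cases h <;> trivial

lemma IsPPat.embed {t : Exp σ} (ht : IsPPat t) : IsPPat (embed t) := by
  induction ht with
  | var x => exact .var x
  | bot => exact .bot
  | capp c ts har _ ih =>
    rw [embed_applyList]
    exact .capp (σ := extSig σ) (Sum.inl c) _ (by simpa using har) (by simpa using ih)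
  | fapp f ts har _ ih =>
    rw [embed_applyList]
    exact .fapp (σ := extSig σ) (Sum.inl f) _ (by simpa using har) (by simpa using ih)

lemma IsPPat.hat {t : Exp σ} (ht : IsPPat t) : IsPPat (hat t) := by
  induction ht with
  | var x => exact .var x
  | bot => exact .capp (σ := extSig σ) (.inr ()) [] (by simp) (by simp)
  | capp c ts har _ ih =>
    rw [hat_applyList]
    exact .capp (σ := extSig σ) (Sum.inl c) _ (by simpa using har) (by simpa using ih)
  | fapp f ts har _ ih =>
    rw [hat_applyList]
    exact .fapp (σ := extSig σ) (Sum.inl f) _ (by simpa using har) (by simpa using ih)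

lemma Deriv.map_embed {e t : Exp σ} (d : Deriv P e t) :
    Deriv (embedProg P) (embed e) (embed t) := by
  induction d using Deriv.induction with
  | bot e => exact .bot _
  | rr x => exact .rr x
  | dc h es ts hh hpat hd =>
    rw [embed_applyList, embed_applyList]
    refine .dc hh.embed (by simpa [embed_applyList] using hpat.embed) ?_
    simpa using hd.imp fun _ _ => Exists.snd
  | opr r hr θ hθ es as t hd hc ih =>
    rw [embed_applyList, List.map_append]
    refine .opr (P := embedProg P) (Set.mem_image_of_mem _ hr) (θ := fun x => embed (θ x))
      (fun x => (hθ x).embed) ?_ (by simpa [embedRule, subst_applyList, embed_applyList] using ih)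
    simpa [embedRule, Function.comp_def] using hd.imp fun _ _ => Exists.snd

end Embedding

section ProbingRules

variable {P : Program σ}

lemma fn_of_mem_Pg {r : Rule (extSig σ)} (hr : r ∈ Pg σ) : ∃ u, r.fn = .inr u := by
  rcases hr with ⟨x, rfl⟩ | rfl | ⟨h, ts, -, rfl⟩ <;> exact ⟨_, rfl⟩

lemma respectsArity_Pg : RespectsArity (Pg σ) := by
  rintro r (⟨x, rfl⟩ | rfl | ⟨h, ts, -, rfl⟩) <;> rfl

lemma RespectsArity.extProg (hP : RespectsArity P) : RespectsArity (embedProg P ∪ Pg σ) := by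
  rintro r (⟨r₀, hr₀, rfl⟩ | hr)
  · exact (List.length_map _).trans (hP r₀ hr₀)
  · exact respectsArity_Pg r hr

lemma injOn_fn_Pg : Set.InjOn Rule.fn (Pg σ) := by
  have ne_var (h : σ.FS ⊕ σ.CS) ts x : applyList (symExp h) ts ≠ .var x :=
    applyList_ne_var (isSymb_symExp h) ts x
  have ne_bot (h : σ.FS ⊕ σ.CS) ts : applyList (symExp h) ts ≠ .bot := fun he =>
    symExp_ne_bot h (applyList_inj (es' := []) he (isSymb_symExp h) trivial).1
  rintro r (⟨x, rfl⟩ | rfl | ⟨h, ts, -, rfl⟩) r' (⟨x', rfl⟩ | rfl | ⟨h', ts', -, rfl⟩) he <;>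
    replace he := Sum.inr.inj he
  · rw [Exp.var.inj he]
  · cases he
  · exact absurd he.symm (ne_var h' ts' x)
  · cases he
  · rfl
  · exact absurd he.symm (ne_bot h' ts')
  · exact absurd he (ne_var h ts x')
  · exact absurd he (ne_bot h ts)
  · obtain ⟨hh, rfl⟩ := applyList_inj he (isSymb_symExp h) (isSymb_symExp h')
    rw [symExp_injective hh]

lemma subst_embed_symExp (θ : ℕ → Exp (extSig σ)) (h : σ.FS ⊕ σ.CS) :
    subst θ (embed (symExp h)) = embed (symExp h) := by
  cases h <;> rfl

lemma map_subst_gAppRule_lhs (θ : ℕ → Exp (extSig σ)) (h : σ.FS ⊕ σ.CS) (ts : List (Exp σ)) :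
    (gAppRule h ts).lhs.map (subst θ) =
      [applyList (embed (symExp h)) ((List.range ts.length).map θ)] := by
  simp [gAppRule, subst_applyList, subst_embed_symExp, Function.comp_def, subst]

lemma subst_gAppRule_rhs (θ : ℕ → Exp (extSig σ)) (h : σ.FS ⊕ σ.CS) (ts : List (Exp σ)) :
    subst θ (gAppRule h ts).rhs =
      applyList (embed (symExp h)) (ts.mapIdx fun i u => .app (gE u) (θ i)) := by
  rw [gAppRule, subst_applyList, subst_embed_symExp]
  congr 1
  apply List.ext_getElem <;> simp [subst, gE]

end ProbingRules

section Conservativity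

variable {P : Program σ}

def unembed : Exp (extSig σ) → Exp σ
  | .var x => .var x
  | .fn f => Sum.elim Exp.fn (fun _ => .bot) f
  | .cn c => Sum.elim Exp.cn (fun _ => .bot) c
  | .bot => .bot
  | .app a b => .app (unembed a) (unembed b)

def FreshFree : Exp (extSig σ) → Prop
  | .var _ => True
  | .fn f => f.isLeft
  | .cn c => c.isLeft
  | .bot => True
  | .app a b => FreshFree a ∧ FreshFree b

@[simp] lemma unembed_embed (e : Exp σ) : unembed (embed e) = e := by
  induction e <;> simp_all [embed, unembed]

lemma freshFree_embed (e : Exp σ) : FreshFree (embed e) := by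
  induction e <;> simp_all [embed, FreshFree]

lemma unembed_applyList (h : Exp (extSig σ)) (l : List (Exp (extSig σ))) :
    unembed (applyList h l) = applyList (unembed h) (l.map unembed) :=
  map_applyList unembed (fun _ _ => rfl) h l

lemma freshFree_applyList {h : Exp (extSig σ)} {l : List (Exp (extSig σ))} :
    FreshFree (applyList h l) ↔ FreshFree h ∧ ∀ e ∈ l, FreshFree e := by
  induction l generalizing h with
  | nil => simp
  | cons a l ih => simp [ih, FreshFree, and_assoc]

lemma unembed_subst_embed (θ : ℕ → Exp (extSig σ)) (u : Exp σ) :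
    unembed (subst θ (embed u)) = subst (fun x => unembed (θ x)) u := by
  induction u <;> simp_all [embed, subst, unembed]

lemma freshFree_subst_embed_iff {θ : ℕ → Exp (extSig σ)} {u : Exp σ} :
    FreshFree (subst θ (embed u)) ↔ ∀ x ∈ occVars u, FreshFree (θ x) := by
  induction u <;> simp_all [embed, subst, occVars, FreshFree, or_imp, forall_and]

lemma IsSymb.unembed {h : Exp (extSig σ)} (hh : IsSymb h) : IsSymb (unembed h) := by
  rcases h with _ | (_ | _) | (_ | _) | _ | _ <;> trivial

lemma IsPPat.unembed {p : Exp (extSig σ)} (hp : IsPPat p) : IsPPat (unembed p) := by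
  induction hp with
  | var x => exact .var x
  | bot => exact .bot
  | capp c ts har _ ih =>
    rw [unembed_applyList]
    rcases c with c | u
    · exact .capp c _ (by simpa using har) (by simpa using ih)
    · obtain rfl : ts = [] := by simpa using har
      exact .bot
  | fapp f ts har _ ih =>
    rw [unembed_applyList]
    rcases f with f | t
    · exact .fapp f _ (by simpa using har) (by simpa using ih)
    · obtain rfl : ts = [] := by simpa using har
      exact .bot

/-- Conservativity of `P ⊎ P_g` over `P`: the rules of `P_g` never fire from a fresh-free
expression, and substituted rule instances stay fresh-free because `P` has no extra variables. -/
lemma Deriv.unembed_of_freshFree (hP : ∀ r ∈ P, r.NoExtra) {E s : Exp (extSig σ)}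
    (d : Deriv (embedProg P ∪ Pg σ) E s) (hE : FreshFree E) :
    FreshFree s ∧ Deriv P (unembed E) (unembed s) := by
  induction d using Deriv.induction with
  | bot => exact ⟨trivial, .bot _⟩
  | rr x => exact ⟨trivial, .rr x⟩
  | dc h es ts hh hpat hd =>
    obtain ⟨hh', hes⟩ := freshFree_applyList.1 hE
    have hd' := ((List.forall₂_and_left _ _).2 ⟨hes, hd⟩).imp fun _ _ ⟨he, _, ih⟩ => ih he
    refine ⟨freshFree_applyList.2 ⟨hh', hd'.forall_mem_right fun _ _ => And.left⟩, ?_⟩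
    rw [unembed_applyList, unembed_applyList]
    exact .dc hh.unembed (by simpa [unembed_applyList] using hpat.unembed)
      (by simpa using hd'.imp fun _ _ => And.right)
  | opr r hr θ hθ es as t hd hc ih =>
    obtain ⟨hf, hargs⟩ := freshFree_applyList.1 hE
    rw [List.forall_mem_append] at hargs
    obtain ⟨r₀, hr₀, rfl⟩ : ∃ r₀ ∈ P, embedRule r₀ = r := by
      rcases hr with hr | hr
      · exact hr
      · obtain ⟨u, hu⟩ := fn_of_mem_Pg hr
        simp [FreshFree, hu] at hf
    have hd' := ((List.forall₂_and_left _ _).2 ⟨hargs.1, hd⟩).imp fun _ _ ⟨he, _, ih⟩ => ih he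
    have hθ_lhs : ∀ x ∈ r₀.lhs.flatMap occVars, FreshFree (θ x) := by
      simp only [List.mem_flatMap]
      rintro x ⟨u, hu, hx⟩
      refine freshFree_subst_embed_iff.1 (hd'.forall_mem_right (fun _ _ => And.left) _ ?_) x hx
      simpa [embedRule] using ⟨u, hu, rfl⟩
    obtain ⟨hs, hc'⟩ := ih (freshFree_applyList.2
      ⟨freshFree_subst_embed_iff.2 fun x hx => hθ_lhs x (hP r₀ hr₀ x hx), hargs.2⟩)
    refine ⟨hs, ?_⟩
    rw [unembed_applyList, List.map_append]
    refine .opr hr₀ (θ := fun x => unembed (θ x)) (fun x => (hθ x).unembed) ?_ ?_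
    · simpa [embedRule, unembed_subst_embed] using hd'.imp fun _ _ => And.right
    · simpa [embedRule, unembed_applyList, unembed_subst_embed] using hc'

end Conservativity

section Probing

variable {P : Program σ}

lemma Deriv.inv_probe {r : Rule (extSig σ)} (hr : r ∈ Pg σ) {t : Exp σ} (hfn : r.fn = .inr t)
    {E s : Exp (extSig σ)} (d : Deriv (embedProg P ∪ Pg σ) (.app (gE t) E) s) (hs : s ≠ .bot) :
    ∃ θ, PSub θ ∧ Forall₂ (Deriv (embedProg P ∪ Pg σ)) [E] (r.lhs.map (subst θ)) ∧
      Deriv (embedProg P ∪ Pg σ) (subst θ r.rhs) s := by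
  rcases d.cases with hbot | ⟨x, hx, -⟩ | ⟨h, es, ts, hh, hpat, hd, he, -⟩ |
    ⟨r', hr', θ, es, as, hθ, hd, hc, he⟩
  · exact absurd hbot hs
  · cases hx
  · change applyList (gE t) [E] = _ at he
    obtain ⟨rfl, rfl⟩ := applyList_inj he trivial hh
    have hlt := IsPPat.length_lt_arityF (σ := extSig σ) (f := Sum.inr t) hpat
    have hlen := hd.length_eq
    simp only [List.length_singleton, extSig_arityF_inr] at hlt hlen
    omega
  · change applyList (gE t) [E] = _ at he
    obtain ⟨hfn', hargs⟩ := applyList_inj he trivial trivial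
    have hr'Pg : r' ∈ Pg σ := by
      rcases hr' with ⟨r₀, -, rfl⟩ | hr'
      · cases hfn'
      · exact hr'
    obtain rfl : r = r' := injOn_fn_Pg hr hr'Pg (hfn.trans (Exp.fn.inj hfn'))
    have hlen : es.length = 1 := by
      rw [hd.length_eq, List.length_map, respectsArity_Pg r hr, hfn, extSig_arityF_inr]
    obtain ⟨e, rfl⟩ := List.length_eq_one_iff.1 hlen
    obtain ⟨rfl, rfl⟩ : e = E ∧ as = [] := by simpa using hargs.symm
    exact ⟨θ, hθ, hd, hc⟩

lemma Deriv.probe {Q : Program (extSig σ)} (hQ : Pg σ ⊆ Q) {t : Exp σ} (ht : IsPPat t)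
    {E : Exp (extSig σ)} (hE : Deriv Q E (embed t)) : Deriv Q (.app (gE t) E) (hat t) := by
  induction ht using IsPPat.induction_symExp generalizing E with
  | var x =>
    exact .opr (es := [E]) (as := []) (hQ (.inl ⟨x, rfl⟩)) (θ := fun _ => .var x)
      (fun _ => .var x) (.cons hE .nil) (.rr x)
  | bot =>
    exact .opr (es := [E]) (as := []) (hQ (Or.inr (Or.inl rfl))) (θ := fun _ => .bot)
      (fun _ => .bot) (.cons (.bot E) .nil) (.refl IsPPat.bot.hat)
  | app h ts hp ih =>
    have hts : ∀ i (hi : i < ts.length), IsPPat ts[i] := fun i hi =>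
      hp.of_mem_args (isSymb_symExp h) _ (List.getElem_mem hi)
    let θ : ℕ → Exp (extSig σ) := fun i => if hi : i < ts.length then embed ts[i] else .var i
    have hθ : PSub θ := fun i => by
      by_cases hi : i < ts.length
      · simpa [θ, hi] using (hts i hi).embed
      · simpa [θ, hi] using IsPPat.var i
    have hθ_range : (List.range ts.length).map θ = ts.map embed :=
      List.ext_getElem (by simp) fun i _ hi => by
        simp only [List.length_map] at hi
        simp [θ, hi]
    refine .opr (es := [E]) (as := []) (hQ (.inr (.inr ⟨h, ts, hp, rfl⟩))) hθ ?_ ?_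
    · rw [map_subst_gAppRule_lhs, hθ_range, ← embed_applyList]
      exact .cons hE .nil
    · rw [applyList_nil, subst_gAppRule_rhs, hat_applyList, hat_symExp]
      refine .dc (isSymb_symExp h).embed (by rw [← hat_symExp, ← hat_applyList]; exact hp.hat)
        (List.forall₂_mapIdx_map_iff.2 fun i hi => ?_)
      simpa [θ, hi] using ih _ (hts i hi) (List.getElem_mem hi) (.refl (hts i hi).embed)

lemma Deriv.of_probe (hP : WFProg P) {t : Exp σ} (ht : IsPPat t) {E : Exp (extSig σ)}
    (hE : FreshFree E) (d : Deriv (embedProg P ∪ Pg σ) (.app (gE t) E) (hat t)) :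
    Deriv P (unembed E) t := by
  have hArity := hP.respectsArity.extProg
  have hNoExtra : ∀ r ∈ P, r.NoExtra := fun r hr => (hP r hr).2
  induction ht using IsPPat.induction_symExp generalizing E with
  | var x =>
    obtain ⟨θ, hθ, hlhs, hrhs⟩ := d.inv_probe (.inl ⟨x, rfl⟩) rfl (hat_ne_bot _)
    have hθ0 : θ 0 = .var x := (hrhs.approx hArity (hθ 0)).var_left
    simp only [List.map, List.forall₂_cons, subst, hθ0] at hlhs
    exact (hlhs.1.unembed_of_freshFree hNoExtra hE).2
  | bot => exact .bot _
  | app h ts hp ih =>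
    obtain ⟨θ, hθ, hlhs, hrhs⟩ := d.inv_probe (.inr (.inr ⟨h, ts, hp, rfl⟩)) rfl (hat_ne_bot _)
    rw [map_subst_gAppRule_lhs, List.forall₂_cons] at hlhs
    obtain ⟨hfree, hmatch⟩ := hlhs.1.unembed_of_freshFree hNoExtra hE
    rw [unembed_applyList, unembed_embed, List.map_map] at hmatch
    have hθfree : ∀ i < ts.length, FreshFree (θ i) := fun i hi =>
      (freshFree_applyList.1 hfree).2 _ (List.mem_map_of_mem (List.mem_range.2 hi))
    rw [subst_gAppRule_rhs, hat_applyList, hat_symExp] at hrhs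
    have hargs := hrhs.forall₂_of_applyList hArity (isSymb_symExp h).embed
      (by rw [← hat_symExp, ← hat_applyList]; exact hp.hat) (by simp)
    rw [List.forall₂_mapIdx_map_iff] at hargs
    refine hmatch.mono ((Approx.refl _).applyList_mono
      (List.forall₂_map_range_iff.2 fun i hi => ?_)) hp
    have hti := hp.of_mem_args (isSymb_symExp h) _ (List.getElem_mem hi)
    exact (ih _ hti (List.getElem_mem hi) (hθfree i hi) (hargs i hi)).approx
      hP.respectsArity (hθ i).unembed

end Probing

section SafeExtension

lemma expFS_embed_subset (e : Exp σ) : expFS (embed e) ⊆ Set.range Sum.inl := by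
  induction e with
  | fn f =>
    rintro _ rfl
    exact ⟨f, rfl⟩
  | app a b iha ihb => exact Set.union_subset iha ihb
  | _ => exact Set.empty_subset _

lemma progFS_embedProg_subset (P : Program σ) : progFS (embedProg P) ⊆ Set.range Sum.inl := by
  simp only [progFS, embedProg, Set.biUnion_image, Set.iUnion₂_subset_iff, ruleFS, embedRule,
    List.mem_map]
  refine fun r _ => Set.insert_subset ⟨r.fn, rfl⟩
    (Set.union_subset (Set.iUnion₂_subset ?_) (expFS_embed_subset _))
  rintro _ ⟨a, -, rfl⟩
  exact expFS_embed_subset a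

lemma defs_Pg_subset : defs (Pg σ) ⊆ Set.range Sum.inr := by
  rintro _ ⟨r, hr, rfl⟩
  obtain ⟨u, hu⟩ := fn_of_mem_Pg hr
  exact ⟨u, hu.symm⟩

lemma safeExt_Pg (P : Program σ) (e : Exp σ) :
    SafeExt (embedProg P) (embedProg P ∪ Pg σ) (embed e) := by
  refine ⟨Pg σ, rfl, Set.disjoint_left.2 ?_, Set.isCompl_range_inl_range_inr.disjoint.symm.mono
    defs_Pg_subset (Set.union_subset (expFS_embed_subset e) (progFS_embedProg_subset P))⟩
  rintro _ ⟨r, -, rfl⟩ hr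
  obtain ⟨u, hu⟩ := fn_of_mem_Pg hr
  cases hu

end SafeExtension

/-- **Lemma 2 (pattern probing)**: `P' = P ⊎ P_{g_t}` is a safe extension of
`(P, e)` and, for every expression `e` and partial pattern `t` built with the
signature of `P`, `t ∈ ⟦e⟧^P` iff `t̂ ∈ ⟦g_t e⟧^{P'}`. -/
theorem pattern_probing (σ : Sig) (P : Program σ) (hP : WFProg P) :
    (∀ e : Exp σ, SafeExt (embedProg P) (embedProg P ∪ Pg σ) (embed e)) ∧
    (∀ (e t : Exp σ), IsPPat t →
      (t ∈ den P e ↔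
        hat t ∈ den (embedProg P ∪ Pg σ) (Exp.app (gE t) (embed e)))) := by
  refine ⟨safeExt_Pg P, fun e t ht => ⟨fun ⟨_, hd⟩ => ⟨ht.hat, ?_⟩, fun ⟨_, hd⟩ => ⟨ht, ?_⟩⟩⟩
  · exact .probe Set.subset_union_right ht (hd.map_embed.mono_prog Set.subset_union_left)
  · simpa using hd.of_probe hP ht (freshFree_embed e)
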